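/- The generating function identity (qνz;q)_s (q^{-k+s+1}z;q)_{k-s} = Σ_{a≥0} ((qz)^a/(q;q)_a) · Σ_{0≤j≤a}(q^sν)^j (ν;q)_{a-j}(ν^{-1}q^{-k};q)_j binom_q(a,j) holds as formal power series in z, for 0 ≤ s ≤ k. -/

import Mathlib

/-!
Both sides solve the q-difference equation
`(1 - qνz)(1 - q^{s-k+1}z) F(qz) = (1 - q^{s+1}νz)(1 - qz) F(z)`.
For the left side this holds factor by factor, since `(cz;q)_m` satisfies
`(1 - cz) F(qz) = (1 - cq^m z) F(z)`; the right side is the Cauchy product of the q-binomial series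
`∑ (w;q)_n/(q;q)_n (uz)^n` for `(u, w) = (q^{s+1}ν, ν⁻¹q^{-k})` and `(q, ν)`, each of which satisfies
`(1 - uwz) F(qz) = (1 - uz) F(z)`. As `q` is not a root of unity, such an equation determines a
power series from its constant term, and both constant terms are `1`.
-/

open scoped BigOperators

noncomputable section

/-- The q-Pochhammer symbol `(z;q)_m = ∏_{j=0}^{m-1} (1 - z q^j)`. -/
def qP (q z : ℝ) (m : ℕ) : ℝ := ∏ j ∈ Finset.range m, (1 - z * q ^ j)

/-- The q-binomial coefficient, zero outside `0 ≤ k ≤ m`. -/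
def qBinom (q : ℝ) (m k : ℕ) : ℝ :=
  if k ≤ m then qP q q m / (qP q q k * qP q q (m - k)) else 0

open PowerSeries Finset

namespace PowerSeries

variable {R : Type*} [CommRing R]

def SolvesQDiff (q : R) (A B P : R⟦X⟧) : Prop :=
  A * rescale q P = B * P

namespace SolvesQDiff

variable {q : R} {A B C D P Q : R⟦X⟧}

theorem mul (hP : SolvesQDiff q A B P) (hQ : SolvesQDiff q C D Q) :
    SolvesQDiff q (A * C) (B * D) (P * Q) := by
  unfold SolvesQDiff at *
  rw [map_mul]
  linear_combination C * rescale q Q * hP + B * P * hQ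

theorem sub (hP : SolvesQDiff q A B P) (hQ : SolvesQDiff q A B Q) :
    SolvesQDiff q A B (P - Q) := by
  unfold SolvesQDiff at *
  rw [map_sub, mul_sub, mul_sub, hP, hQ]

theorem eq_zero [IsDomain R] (hq : ¬ IsOfFinOrder q) (hA : constantCoeff A = 1)
    (hB : constantCoeff B = 1) (hD : SolvesQDiff q A B D) (hD0 : constantCoeff D = 0) :
    D = 0 := by
  by_contra hne
  set n := D.order.toNat
  set E := divXPowOrder D
  have hDE : D = X ^ n * E := X_pow_order_mul_divXPowOrder.symm
  have hE0 : constantCoeff E ≠ 0 := constantCoeff_divXPowOrder_eq_zero_iff.not.mpr hne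
  have hn : n ≠ 0 := by
    rintro hn
    rw [hDE, hn, pow_zero, one_mul] at hD0
    exact hE0 hD0
  have hEq : C (q ^ n) * A * rescale q E = B * E := by
    refine mul_left_cancel₀ (pow_ne_zero n X_ne_zero) ?_
    unfold SolvesQDiff at hD
    rw [hDE, map_mul, map_pow, rescale_X, mul_pow, ← map_pow] at hD
    linear_combination hD
  have hqn : (q ^ n - 1) * constantCoeff E = 0 := by
    have hresc : constantCoeff (rescale q E) = constantCoeff E := by
      rw [← coeff_zero_eq_constantCoeff_apply, coeff_rescale, pow_zero, one_mul,
        coeff_zero_eq_constantCoeff_apply]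
    have := congrArg constantCoeff hEq
    simp only [map_mul, constantCoeff_C, hA, hB, hresc] at this
    linear_combination this
  exact hq (isOfFinOrder_iff_pow_eq_one.mpr
    ⟨n, Nat.pos_of_ne_zero hn, sub_eq_zero.mp ((mul_eq_zero.mp hqn).resolve_right hE0)⟩)

theorem eq_of_constantCoeff_eq [IsDomain R] (hq : ¬ IsOfFinOrder q) (hA : constantCoeff A = 1)
    (hB : constantCoeff B = 1) (hP : SolvesQDiff q A B P) (hQ : SolvesQDiff q A B Q)
    (h0 : constantCoeff P = constantCoeff Q) : P = Q :=
  sub_eq_zero.mp <| (hP.sub hQ).eq_zero hq hA hB (by rw [map_sub, h0, sub_self])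

end SolvesQDiff

theorem rescale_one_sub_C_mul_X (q a : R) :
    rescale q (1 - C a * X) = 1 - C (a * q) * X := by
  ext n
  rw [coeff_rescale]
  rcases n with _ | _ | n <;> simp [coeff_one, coeff_X, mul_comm]

theorem solvesQDiff_prod_one_sub_C_mul_X (q c : R) (m : ℕ) :
    SolvesQDiff q (1 - C c * X) (1 - C (c * q ^ m) * X)
      (∏ j ∈ range m, (1 - C (c * q ^ j) * X)) := by
  have hshift : rescale q (∏ j ∈ range m, (1 - C (c * q ^ j) * X))
      = ∏ j ∈ range m, (1 - C (c * q ^ (j + 1)) * X) := by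
    simp only [map_prod, rescale_one_sub_C_mul_X, pow_succ, mul_assoc]
  unfold SolvesQDiff
  rw [hshift, mul_comm (1 - C (c * q ^ m) * X), ← prod_range_succ (fun j ↦ 1 - C (c * q ^ j) * X),
    prod_range_succ', pow_zero, mul_one, mul_comm]

end PowerSeries

theorem qP_succ (q z : ℝ) (m : ℕ) : qP q z (m + 1) = qP q z m * (1 - z * q ^ m) :=
  prod_range_succ _ _

theorem one_sub_pow_succ_ne_zero {R : Type*} [Ring R] {q : R} (hq : ¬ IsOfFinOrder q) (n : ℕ) :
    1 - q ^ (n + 1) ≠ 0 :=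
  sub_ne_zero.mpr fun h ↦ hq <| isOfFinOrder_iff_pow_eq_one.mpr ⟨n + 1, n.succ_pos, h.symm⟩

theorem qP_self_ne_zero {q : ℝ} (hq : ¬ IsOfFinOrder q) (n : ℕ) : qP q q n ≠ 0 :=
  prod_ne_zero_iff.mpr fun j _ ↦ pow_succ' q j ▸ one_sub_pow_succ_ne_zero hq j

theorem not_isOfFinOrder_of_nonneg_of_lt_one {R : Type*} [Semiring R] [PartialOrder R]
    [IsStrictOrderedRing R] {q : R} (hq0 : 0 ≤ q) (hq1 : q < 1) : ¬ IsOfFinOrder q := fun h ↦ by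
  obtain ⟨n, hn, hqn⟩ := isOfFinOrder_iff_pow_eq_one.mp h
  exact (pow_lt_one₀ hq0 hq1 hn.ne').ne hqn

/-- By the q-binomial theorem this is the expansion of `(uwz;q)_∞/(uz;q)_∞`. -/
def qBinomialSeries (q u w : ℝ) : ℝ⟦X⟧ :=
  mk fun n ↦ u ^ n * qP q w n / qP q q n

theorem solvesQDiff_qBinomialSeries {q : ℝ} (hq : ¬ IsOfFinOrder q) (u w : ℝ) :
    SolvesQDiff q (1 - C (u * w) * X) (1 - C u * X) (qBinomialSeries q u w) := by
  unfold SolvesQDiff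
  ext n
  rcases n with _ | n
  · simp [qBinomialSeries, rescale_mk]
  simp only [sub_mul, one_mul, map_sub, mul_assoc, coeff_C_mul, coeff_succ_X_mul, coeff_rescale,
    qBinomialSeries, coeff_mk, qP_succ, ← pow_succ']
  have := qP_self_ne_zero hq n
  have := one_sub_pow_succ_ne_zero hq n
  field_simp
  ring

theorem qBinomialSeries_mul_qBinomialSeries {q : ℝ} (hq : ¬ IsOfFinOrder q) (t w v : ℝ) :
    qBinomialSeries q (q * t) w * qBinomialSeries q q v
      = mk fun a ↦ q ^ a / qP q q a *
          ∑ j ∈ range (a + 1), t ^ j * qP q v (a - j) * qP q w j * qBinom q a j := by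
  ext a
  rw [coeff_mul, Nat.sum_antidiagonal_eq_sum_range_succ_mk, coeff_mk, mul_sum]
  refine sum_congr rfl fun j hj ↦ ?_
  have hja : j ≤ a := mem_range_succ_iff.mp hj
  have hpow : (q * t) ^ j * q ^ (a - j) = q ^ a * t ^ j := by
    rw [mul_pow, mul_right_comm, ← pow_add, Nat.add_sub_cancel' hja]
  simp only [qBinomialSeries, coeff_mk, qBinom, if_pos hja]
  have := qP_self_ne_zero hq j
  have := qP_self_ne_zero hq (a - j)
  have := qP_self_ne_zero hq a
  field_simp
  linear_combination qP q w j * qP q v (a - j) * hpow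

open PowerSeries in
/-- The generating function identity
`(qνz;q)_s (q^{-k+s+1}z;q)_{k-s}
  = ∑_{a≥0} ((qz)^a/(q;q)_a) ∑_{0≤j≤a}(q^sν)^j (ν;q)_{a-j}(ν^{-1}q^{-k};q)_j binom_q(a,j)`
as formal power series in `z`, for `0 ≤ s ≤ k`. -/
theorem generating_identity (q ν : ℝ) (hq0 : 0 < q) (hq1 : q < 1)
    (hν : ν ≠ 0) (s k : ℕ) (hsk : s ≤ k) :
    (∏ j ∈ Finset.range s, (1 - C (R := ℝ) (q * ν * q ^ j) * X)) *
      (∏ j ∈ Finset.range (k - s),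
        (1 - C (R := ℝ) ((q : ℝ) ^ ((s : ℤ) - k + 1) * q ^ j) * X))
      = PowerSeries.mk (fun a =>
          q ^ a / qP q q a *
            ∑ j ∈ Finset.range (a + 1),
              (q ^ s * ν) ^ j * qP q ν (a - j) *
                qP q (ν⁻¹ * q ^ (-(k : ℤ))) j * qBinom q a j) := by
  have hq := not_isOfFinOrder_of_nonneg_of_lt_one hq0.le hq1
  have hr : q ^ ((s : ℤ) - k + 1) * q ^ (k - s) = q := by
    rw [← zpow_natCast, ← zpow_add₀ hq0.ne', Nat.cast_sub hsk,
      show (s : ℤ) - k + 1 + (k - s) = 1 by ring, zpow_one]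
  have hw : q * (q ^ s * ν) * (ν⁻¹ * q ^ (-(k : ℤ))) = q ^ ((s : ℤ) - k + 1) := calc
    _ = q ^ (1 : ℤ) * q ^ (s : ℤ) * q ^ (-(k : ℤ)) * (ν * ν⁻¹) := by
      rw [zpow_one, zpow_natCast]; ring
    _ = _ := by
      rw [mul_inv_cancel₀ hν, mul_one, ← zpow_add₀ hq0.ne', ← zpow_add₀ hq0.ne']
      congr 1; ring
  rw [← qBinomialSeries_mul_qBinomialSeries hq]
  have hLHS := (solvesQDiff_prod_one_sub_C_mul_X q (q * ν) s).mul
    (solvesQDiff_prod_one_sub_C_mul_X q (q ^ ((s : ℤ) - k + 1)) (k - s))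
  have hRHS := (solvesQDiff_qBinomialSeries hq (q * (q ^ s * ν)) (ν⁻¹ * q ^ (-(k : ℤ)))).mul
    (solvesQDiff_qBinomialSeries hq q ν)
  rw [hr, show q * ν * q ^ s = q * (q ^ s * ν) by ring, mul_comm (1 - C (q * ν) * X)] at hLHS
  rw [hw] at hRHS
  refine hLHS.eq_of_constantCoeff_eq hq ?_ ?_ hRHS ?_
  · simp
  · simp
  · simp [qBinomialSeries, qP]
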